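/- arXiv:1511.04019 — 2 statements merged into one kernel-verified Lean document; each statement's English description precedes it below -/
import Mathlib

section
/- Under the hypotheses |U₁| = |U₂| and U·conj(U₁) + conj(U)·U₂ = 0 with ε = 1, the matrix [[U₁, U],[U, U₂]] is invertible whenever (U, U₁, U₂) ≠ (0,0,0). -/
/-!
If `U₁U₂ = U²`, then `conj U₁ · (U₁U₂ - U²) + U · (U conj U₁ + conj U · U₂) = U₂ (|U₁|² + |U|²)`
vanishes, so either `U₂ = 0` or `U₁ = U = 0`; with `|U₁| = |U₂|` and `U² = U₁U₂` all three vanish.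
-/

open ComplexConjugate

section

variable {𝕜 : Type*} [RCLike 𝕜]

lemma mul_norm_sq_add_norm_sq_eq_zero {U U₁ U₂ : 𝕜}
    (horth : U * conj U₁ + conj U * U₂ = 0) (hdet : U₁ * U₂ = U ^ 2) :
    U₂ * ((‖U₁‖ ^ 2 + ‖U‖ ^ 2 : ℝ) : 𝕜) = 0 := by
  push_cast
  rw [← RCLike.conj_mul, ← RCLike.conj_mul]
  linear_combination conj U₁ * hdet + U * horth

lemma eq_zero_and_eq_zero_of_norm_sq_add_norm_sq_eq_zero {x y : 𝕜}
    (h : ((‖x‖ ^ 2 + ‖y‖ ^ 2 : ℝ) : 𝕜) = 0) : x = 0 ∧ y = 0 := by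
  rw [RCLike.ofReal_eq_zero, add_eq_zero_iff_of_nonneg (by positivity) (by positivity)] at h
  exact ⟨norm_eq_zero.mp (pow_eq_zero_iff two_ne_zero |>.mp h.1),
    norm_eq_zero.mp (pow_eq_zero_iff two_ne_zero |>.mp h.2)⟩

end

/-- Under the hypotheses `|U₁| = |U₂|` and `U·conj(U₁) + conj(U)·U₂ = 0` with `ε = 1`,
the matrix `[[U₁, U],[U, U₂]]` is invertible whenever `(U, U₁, U₂) ≠ (0,0,0)`:
its determinant `U₁U₂ - U²` is nonzero. -/
theorem definite_case_nondegenerate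
    (U U₁ U₂ : ℂ)
    (h1 : ‖U₁‖ = ‖U₂‖)
    (h2 : U * (starRingEnd ℂ) U₁ + (starRingEnd ℂ) U * U₂ = 0)
    (hne : ¬ (U = 0 ∧ U₁ = 0 ∧ U₂ = 0)) :
    U₁ * U₂ - U ^ 2 ≠ 0 := by
  intro hdet
  have hdet : U₁ * U₂ = U ^ 2 := sub_eq_zero.mp hdet
  have hU₁_iff : U₁ = 0 ↔ U₂ = 0 := by rw [← norm_eq_zero, h1, norm_eq_zero]
  apply hne
  rcases mul_eq_zero.mp (mul_norm_sq_add_norm_sq_eq_zero h2 hdet) with hU₂ | hsum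
  · have hU₁ : U₁ = 0 := hU₁_iff.mpr hU₂
    rw [hU₁, zero_mul, eq_comm, pow_eq_zero_iff two_ne_zero] at hdet
    exact ⟨hdet, hU₁, hU₂⟩
  · obtain ⟨hU₁, hU⟩ := eq_zero_and_eq_zero_of_norm_sq_add_norm_sq_eq_zero hsum
    exact ⟨hU, hU₁, hU₁_iff.mp hU₁⟩
end

section
/- The subgroup P²⋆ = {I + iyE₁₄ : y ∈ ℝ} is normal in the group P²⋆P¹⋆ generated by it and the matrices of P¹⋆. -/
open Matrix

/-- The matrices `I + iy·E₁₄` for `y ∈ ℝ` (the group `P²⋆`). -/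
noncomputable def P2mat (y : ℝ) : Matrix (Fin 4) (Fin 4) ℂ :=
  !![1, 0, 0, Complex.I * y;
     0, 1, 0, 0;
     0, 0, 1, 0;
     0, 0, 0, 1]

/-- The matrices of `P¹⋆`, parameterized by `(c¹, c²) ∈ ℂ²`. -/
noncomputable def P1mat (ε : ℝ) (c1 c2 : ℂ) : Matrix (Fin 4) (Fin 4) ℂ :=
  !![1, c2, -(starRingEnd ℂ) c1,
       -(1 / 2) * ((Complex.normSq c1 : ℂ) - (ε : ℂ) * (Complex.normSq c2 : ℂ));
     0, 1, 0, (ε : ℂ) * (starRingEnd ℂ) c2;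
     0, 0, 1, c1;
     0, 0, 0, 1]

/-- `P²⋆` is normal in the group `P²⋆P¹⋆` it generates together with `P¹⋆`:
for every element `g = P2(y)·P1(c¹,c²)` of the generated group and every `p ∈ P²⋆`,
the conjugate `g p g⁻¹` again lies in `P²⋆`. -/
theorem P2_normal_in_P2P1 (ε : ℝ) (hε : ε = 1 ∨ ε = -1) :
    ∀ (y : ℝ) (c1 c2 : ℂ) (p : ℝ),
      (P2mat y * P1mat ε c1 c2) * P2mat p * (P2mat y * P1mat ε c1 c2)⁻¹
        ∈ Set.range P2mat := by
  intro y c1 c2 p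
  set g : Matrix (Fin 4) (Fin 4) ℂ := P2mat y * P1mat ε c1 c2 with hg
  have hdet : IsUnit g.det := by
    have : g.det = 1 := by
      simp [hg, P2mat, P1mat, Matrix.det_succ_row_zero, Fin.sum_univ_succ]
    rw [this]; exact isUnit_one
  have hcomm : g * P2mat p = P2mat p * g := by
    ext i j
    fin_cases i <;> fin_cases j <;>
      simp [hg, P2mat, P1mat, Matrix.mul_apply, Fin.sum_univ_four, Matrix.vecHead, Matrix.vecTail] <;> ring
  refine ⟨p, ?_⟩
  symm
  rw [hcomm, Matrix.mul_nonsing_inv_cancel_right _ _ hdet]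
end
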